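/- arXiv:0912.2627 — 2 statements merged into one kernel-verified Lean document; each statement's English description precedes it below -/
import Mathlib

section
/- Fix integers 1 ≤ I < K and reals b > 0, c, ρ. Define Γ = { v ∈ ∏_{i=I+1}^{K} X_i : (ρ − 1/2)·b ≤ c − ∑_{j=I+1}^{K} log μ_j(v_j) ≤ (ρ + 1/2)·b }, Ψ = { v ∈ ∏_{i=I+1}^{K} X_i : (ρ − 1/2)·b − (I+1)·log 5 ≤ c − ∑_{j=I+1}^{K} log μ_j(v_j) ≤ (ρ + 1/2)·b + (I+1)·log 5 }, V⁰ = { v : ∑_{i=I+1}^{K} π_i(v_i) ≡ 0 (mod 2) } and V¹ = { v : ∑_{i=I+1}^{K} π_i(v_i) ≡ 1 (mod 2) }. Let A₀¹ = { v ∈ Γ : v_{I+1} = 0 and ∑_{i=I+2}^{K} π_i(v_i) ≡ 1 (mod 2) }, A₁⁰ = { v ∈ Γ : π_{I+1}(v_{I+1}) = 1 and ∑_{i=I+2}^{K} π_i(v_i) ≡ 0 (mod 2) }, B₁¹ = { x ∈ ∏_{i=I+1}^{K} X_i : x_{I+1} ≠ 0 and there exists v ∈ A₀¹ with x_i = v_i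 for all i ≥ I+2 }, and B₀⁰ = { x ∈ ∏_{i=I+1}^{K} X_i : x_{I+1} = 0 and there exists v ∈ A₁⁰ with x_i = v_i for all i ≥ I+2 }. Then B₀⁰ ∪ B₁¹ ⊆ Ψ ∩ V⁰ and μ(Z_{B₀⁰ ∪ B₁¹}) ≥ μ(Z_{Γ ∩ V¹}). -/
open MeasureTheory ENNReal Filter

/-- The coordinate space: Lean index `n` is paper index `n+1`, so this is
`X_{n+1} = {0,1,…,5^{n+1}}`. -/
abbrev Xc (n : ℕ) : Type := Fin (5 ^ (n + 1) + 1)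

/-- The weight of a point of `X_{n+1}`: `μ_{n+1}(0) = 1/2`, `μ_{n+1}(i) = 1/(2·5^{n+1})`
for `i ≠ 0`. -/
noncomputable def w (n : ℕ) (a : Xc n) : ℝ≥0∞ :=
  if a = 0 then 1 / 2 else 1 / (2 * 5 ^ (n + 1))

/-- The full product space `X = ∏_{n ≥ 1} X_n`. -/
abbrev XX : Type := (n : ℕ) → Xc n

/-- The cylinder `Z_A` determined by a set `A` of configurations on a finite set `Γ`
of coordinates. -/
def cylSet (Γ : Finset ℕ) (A : Set ((i : Γ) → Xc i)) : Set XX :=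
  {x | (fun i : Γ => x i) ∈ A}

/-- The point cylinder `Z_u`. -/
def cylPt (Γ : Finset ℕ) (u : (i : Γ) → Xc i) : Set XX := cylSet Γ {u}

/-- `μ` is the product measure `⊗ μ_n` iff every point cylinder gets the product of the
weights of its coordinates. (This property determines the product measure uniquely.) -/
def IsProductMeasure (μ : Measure XX) : Prop :=
  ∀ (Γ : Finset ℕ) (u : (i : Γ) → Xc i), μ (cylPt Γ u) = ∏ i : Γ, w i (u i)

/-- The real-valued weight `μ_{n+1}(a)`. -/
noncomputable def wR (n : ℕ) (a : Xc n) : ℝ :=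
  if a = 0 then 1 / 2 else 1 / (2 * 5 ^ (n + 1))

/-- `π_{n+1} : X_{n+1} → {0,1}`, sending `0` to `0` and everything else to `1`. -/
def par (n : ℕ) (a : Xc n) : ℕ := if a = 0 then 0 else 1

/-!
Changing the first coordinate `v_{I+1}` between `0` and a nonzero value changes
`-∑ log μ_j(v_j)` by exactly `(I+1)·log 5` and flips the parity `∑ π_j(v_j)`, and `B₀⁰ ∪ B₁¹` is
the set of such flips of configurations in `Γ ∩ V¹`; this gives the inclusion. For the measures,
fix all coordinates but the first: by the parity of the remaining ones, the fiber of `Γ ∩ V¹` lies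
in `{0}` or in `{0}ᶜ`, and when it is nonempty the fiber of `B₀⁰ ∪ B₁¹` contains the other half.
Both halves have `μ_{I+1}`-mass `1/2`.
-/

section Fiberwise
variable {ι : Type*} [DecidableEq ι] {β : ι → Type*}

theorem update_piSplitAt_symm (i₀ : ι) (a a' : β i₀) (t : ∀ j : {j // j ≠ i₀}, β j) :
    Function.update ((Equiv.piSplitAt i₀ β).symm (a', t)) i₀ a =
      (Equiv.piSplitAt i₀ β).symm (a, t) := by
  funext j
  by_cases hj : j = i₀
  · subst hj; simp
  · simp [hj]

variable [Fintype ι]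

theorem prod_piSplitAt_symm (f : ∀ i, β i → ℝ≥0∞) (i₀ : ι) (a : β i₀)
    (t : ∀ j : {j // j ≠ i₀}, β j) :
    ∏ i, f i ((Equiv.piSplitAt i₀ β).symm (a, t) i) =
      f i₀ a * ∏ j : {j // j ≠ i₀}, f j (t j) := by
  rw [Fintype.prod_eq_mul_prod_subtype_ne _ i₀]
  simp only [Equiv.piSplitAt_symm_apply, dite_true]
  congr 1
  exact Finset.prod_congr rfl fun j _ => by rw [dif_neg j.2]

variable [∀ i, Fintype (β i)]

theorem sum_indicator_prod_eq_sum_fiber (f : ∀ i, β i → ℝ≥0∞) (i₀ : ι) (A : Set (∀ i, β i)) :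
    ∑ v, A.indicator (fun v => ∏ i, f i (v i)) v =
      ∑ t : ∀ j : {j // j ≠ i₀}, β j, (∏ j : {j // j ≠ i₀}, f j (t j)) *
        ∑ a, {a | (Equiv.piSplitAt i₀ β).symm (a, t) ∈ A}.indicator (f i₀) a := by
  rw [← (Equiv.piSplitAt i₀ β).symm.sum_comp, Fintype.sum_prod_type, Finset.sum_comm]
  refine Finset.sum_congr rfl fun t _ => ?_
  rw [Finset.mul_sum]
  refine Finset.sum_congr rfl fun a _ => ?_
  by_cases ha : (Equiv.piSplitAt i₀ β).symm (a, t) ∈ A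
  · rw [Set.indicator_of_mem ha, prod_piSplitAt_symm, mul_comm,
      Set.indicator_of_mem (s := {a | (Equiv.piSplitAt i₀ β).symm (a, t) ∈ A}) ha]
  · rw [Set.indicator_of_notMem ha, mul_eq_zero.2 (Or.inr
      (Set.indicator_of_notMem (s := {a | (Equiv.piSplitAt i₀ β).symm (a, t) ∈ A}) ha _))]

theorem sum_indicator_prod_le_of_fiberwise (f : ∀ i, β i → ℝ≥0∞) (i₀ : ι)
    {A B : Set (∀ i, β i)}
    (h : ∀ v, ∑ a, {a | Function.update v i₀ a ∈ A}.indicator (f i₀) a ≤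
      ∑ a, {a | Function.update v i₀ a ∈ B}.indicator (f i₀) a) :
    ∑ v, A.indicator (fun v => ∏ i, f i (v i)) v ≤
      ∑ v, B.indicator (fun v => ∏ i, f i (v i)) v := by
  rw [sum_indicator_prod_eq_sum_fiber f i₀, sum_indicator_prod_eq_sum_fiber f i₀]
  refine Finset.sum_le_sum fun t _ => mul_le_mul_right ?_ _
  cases isEmpty_or_nonempty (β i₀) with
  | inl _ => simp
  | inr hne =>
    obtain ⟨a'⟩ := hne
    simpa only [update_piSplitAt_symm] using h ((Equiv.piSplitAt i₀ β).symm (a', t))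

end Fiberwise

theorem sum_indicator_le_of_balanced {α : Type*} [Fintype α] (g : α → ℝ≥0∞) {S F G : Set α}
    (hS : ∑ a, S.indicator g a = ∑ a, Sᶜ.indicator g a) (hF : F ⊆ S)
    (hG : F.Nonempty → Sᶜ ⊆ G) :
    ∑ a, F.indicator g a ≤ ∑ a, G.indicator g a := by
  rcases F.eq_empty_or_nonempty with rfl | hne
  · simp
  calc ∑ a, F.indicator g a ≤ ∑ a, S.indicator g a :=
        Finset.sum_le_sum fun a _ => Set.indicator_le_indicator_of_subset hF (fun _ => zero_le) a
    _ = ∑ a, Sᶜ.indicator g a := hS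
    _ ≤ ∑ a, G.indicator g a := Finset.sum_le_sum fun a _ =>
        Set.indicator_le_indicator_of_subset (hG hne) (fun _ => zero_le) a

theorem sum_indicator_singleton_zero_w (n : ℕ) :
    ∑ a, ({0} : Set (Xc n)).indicator (w n) a = 1 / 2 := by
  simp [w]

theorem sum_indicator_compl_singleton_zero_w (n : ℕ) :
    ∑ a, ({0}ᶜ : Set (Xc n)).indicator (w n) a = 1 / 2 := by
  have h5 : (5 : ℝ≥0∞) ^ (n + 1) ≠ 0 := pow_ne_zero _ (by norm_num)
  have h5' : (5 : ℝ≥0∞) ^ (n + 1) ≠ ⊤ := ENNReal.pow_ne_top (by norm_num)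
  simp only [Set.indicator_apply, Set.mem_compl_iff, Set.mem_singleton_iff, w, ite_not]
  rw [Finset.sum_ite, Finset.sum_const_zero, zero_add,
    Finset.sum_congr rfl fun a ha => if_neg (Finset.mem_filter.mp ha).2, Finset.sum_const,
    Finset.filter_ne', Finset.card_erase_of_mem (Finset.mem_univ _), Finset.card_univ, Fintype.card_fin,
    Nat.add_sub_cancel, nsmul_eq_mul, Nat.cast_pow, Nat.cast_ofNat, one_div, one_div,
    ENNReal.mul_inv (by simp) (by simp), mul_left_comm, ENNReal.mul_inv_cancel h5 h5', mul_one]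

theorem measurableSet_cylPt (Δ : Finset ℕ) (u : (i : Δ) → Xc i) : MeasurableSet (cylPt Δ u) :=
  measurable_pi_lambda (fun (x : XX) (i : Δ) => x i) (fun i => measurable_pi_apply (i : ℕ))
    (measurableSet_singleton u)

theorem measure_cylSet_eq_sum {μ : Measure XX} (hμ : IsProductMeasure μ) (Δ : Finset ℕ)
    (A : Set ((i : Δ) → Xc i)) :
    μ (cylSet Δ A) = ∑ u, A.indicator (fun u => ∏ i : Δ, w i (u i)) u := by
  classical
  have hA : cylSet Δ A = ⋃ u ∈ Finset.univ.filter (· ∈ A), cylPt Δ u := by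
    ext x
    simp [cylSet, cylPt]
  rw [hA, measure_biUnion_finset _ fun u _ => measurableSet_cylPt Δ u, Finset.sum_filter]
  · exact Finset.sum_congr rfl fun u _ => by simp only [Set.indicator_apply, hμ Δ u]
  · intro u _ v _ huv
    exact Set.disjoint_left.mpr fun x hu hv => huv (hu.symm.trans hv)

theorem log_wR (n : ℕ) (a : Xc n) :
    Real.log (wR n a) = -Real.log 2 - par n a * ((n + 1) * Real.log 5) := by
  unfold wR par
  split_ifs
  · simp
  · rw [one_div, Real.log_inv, Real.log_mul (by norm_num) (by positivity), Real.log_pow]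
    push_cast
    ring

theorem abs_log_wR_sub_le (n : ℕ) (a a' : Xc n) :
    |Real.log (wR n a) - Real.log (wR n a')| ≤ (n + 1) * Real.log 5 := by
  set L := ((n : ℝ) + 1) * Real.log 5
  have hL : 0 ≤ L := by positivity
  rw [log_wR, log_wR, show ∀ p p' : ℝ, -Real.log 2 - p * L - (-Real.log 2 - p' * L) = (p' - p) * L
    from fun _ _ => by ring, abs_mul, abs_of_nonneg hL]
  refine mul_le_of_le_one_left hL ?_
  unfold par
  split_ifs <;> norm_num

theorem par_eq_zero_iff {n : ℕ} {a : Xc n} : par n a = 0 ↔ a = 0 := by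
  unfold par; split_ifs <;> simp [*]

theorem par_eq_one_iff {n : ℕ} {a : Xc n} : par n a = 1 ↔ a ≠ 0 := by
  unfold par; split_ifs <;> simp [*]

theorem par_le_one {n : ℕ} {a : Xc n} : par n a ≤ 1 := by
  unfold par; split_ifs <;> simp

theorem sum_indicator_w_le_of_parity {n : ℕ} {F G : Set (Xc n)} (t : ℕ)
    (hF : ∀ a ∈ F, (par n a + t) % 2 = 1)
    (hG : ∀ a ∈ F, ∀ b, (par n b + t) % 2 = 0 → b ∈ G) :
    ∑ a, F.indicator (w n) a ≤ ∑ a, G.indicator (w n) a := by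
  refine sum_indicator_le_of_balanced (w n) (S := {a | (par n a + t) % 2 = 1}) ?_ hF
    fun ⟨a, ha⟩ b hb => hG a ha b (by simpa using hb)
  rcases Nat.mod_two_eq_zero_or_one t with ht | ht
  · have hS : {a : Xc n | (par n a + t) % 2 = 1} = {0}ᶜ := by
      ext a
      by_cases ha : a = 0 <;> simp [par, ha] <;> omega
    rw [hS, compl_compl, sum_indicator_singleton_zero_w, sum_indicator_compl_singleton_zero_w]
  · have hS : {a : Xc n | (par n a + t) % 2 = 1} = {0} := by
      ext a
      by_cases ha : a = 0 <;> simp [par, ha] <;> omega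
    rw [hS, sum_indicator_singleton_zero_w, sum_indicator_compl_singleton_zero_w]

section Configurations

variable {I K : ℕ}

abbrev Config (I K : ℕ) : Type := (i : Finset.Ico I K) → Xc i

theorem Ico_ne_iff (hI : I ∈ Finset.Ico I K) (i : Finset.Ico I K) :
    i ≠ ⟨I, hI⟩ ↔ I + 1 ≤ (i : ℕ) := by
  have := Finset.mem_Ico.mp i.2
  rw [Ne, Subtype.ext_iff]
  change ¬(i : ℕ) = I ↔ _
  omega

theorem sum_Ico_eq_add_sum_ite {M : Type*} [AddCommMonoid M] (hI : I ∈ Finset.Ico I K)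
    (f : Finset.Ico I K → M) :
    ∑ i, f i = f ⟨I, hI⟩ + ∑ i : Finset.Ico I K, if I + 1 ≤ (i : ℕ) then f i else 0 := by
  rw [← Finset.sum_filter, ← Finset.add_sum_erase _ f (Finset.mem_univ ⟨I, hI⟩)]
  congr 2
  ext i
  simp [← Ico_ne_iff hI]

theorem sum_ite_eq_of_eqOn {M : Type*} [AddCommMonoid M] (g : (i : Finset.Ico I K) → Xc i → M)
    {x v : Config I K} (h : ∀ i : Finset.Ico I K, I + 1 ≤ (i : ℕ) → x i = v i) :
    (∑ i : Finset.Ico I K, if I + 1 ≤ (i : ℕ) then g i (x i) else 0) =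
      ∑ i : Finset.Ico I K, if I + 1 ≤ (i : ℕ) then g i (v i) else 0 :=
  Finset.sum_congr rfl fun i _ => by
    split_ifs with hi
    · rw [h i hi]
    · rfl

theorem update_apply_of_succ_le (hI : I ∈ Finset.Ico I K) (v : Config I K) (a : Xc I)
    {i : Finset.Ico I K} (hi : I + 1 ≤ (i : ℕ)) : Function.update v ⟨I, hI⟩ a i = v i :=
  Function.update_of_ne ((Ico_ne_iff hI i).2 hi) a v

theorem abs_sum_log_wR_sub_le (hI : I ∈ Finset.Ico I K) {x v : Config I K}
    (h : ∀ i : Finset.Ico I K, I + 1 ≤ (i : ℕ) → x i = v i) :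
    |∑ i : Finset.Ico I K, Real.log (wR i (x i)) - ∑ i : Finset.Ico I K, Real.log (wR i (v i))| ≤
      (I + 1) * Real.log 5 := by
  rw [sum_Ico_eq_add_sum_ite hI (fun i => Real.log (wR i (x i))),
    sum_Ico_eq_add_sum_ite hI (fun i => Real.log (wR i (v i))),
    sum_ite_eq_of_eqOn (fun i a => Real.log (wR i a)) h, add_sub_add_right_eq_sub]
  exact abs_log_wR_sub_le I _ _

/-- `∑_{i=I+2}^{K} π_i(v_i)` in the paper's indexing. -/
def tailPar (v : Config I K) : ℕ :=
  ∑ i : Finset.Ico I K, if I + 1 ≤ (i : ℕ) then par i (v i) else 0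

theorem tailPar_eq_of_eqOn {x v : Config I K}
    (h : ∀ i : Finset.Ico I K, I + 1 ≤ (i : ℕ) → x i = v i) : tailPar x = tailPar v :=
  sum_ite_eq_of_eqOn (fun i a => par i a) h

theorem sum_par_eq (hI : I ∈ Finset.Ico I K) (x : Config I K) :
    ∑ i : Finset.Ico I K, par i (x i) = par I (x ⟨I, hI⟩) + tailPar x :=
  sum_Ico_eq_add_sum_ite hI fun i => par i (x i)

theorem tailPar_update (hI : I ∈ Finset.Ico I K) (v : Config I K) (a : Xc I) :
    tailPar (Function.update v ⟨I, hI⟩ a) = tailPar v :=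
  tailPar_eq_of_eqOn fun _ hi => update_apply_of_succ_le hI v a hi

def IsParityFlip (hI : I ∈ Finset.Ico I K) (x v : Config I K) : Prop :=
  (∀ i : Finset.Ico I K, I + 1 ≤ (i : ℕ) → x i = v i) ∧
    (par I (x ⟨I, hI⟩) + tailPar v) % 2 = 0 ∧ (par I (v ⟨I, hI⟩) + tailPar v) % 2 = 1

theorem mem_union_iff_exists_flip (hI : I ∈ Finset.Ico I K)
    {Γ A01 A10 B11 B00 : Set (Config I K)}
    (hA01 : A01 = {v | v ∈ Γ ∧ v ⟨I, hI⟩ = 0 ∧ tailPar v % 2 = 1})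
    (hA10 : A10 = {v | v ∈ Γ ∧ par I (v ⟨I, hI⟩) = 1 ∧ tailPar v % 2 = 0})
    (hB11 : B11 = {x | x ⟨I, hI⟩ ≠ 0 ∧
      ∃ v ∈ A01, ∀ i : Finset.Ico I K, I + 1 ≤ (i : ℕ) → x i = v i})
    (hB00 : B00 = {x | x ⟨I, hI⟩ = 0 ∧
      ∃ v ∈ A10, ∀ i : Finset.Ico I K, I + 1 ≤ (i : ℕ) → x i = v i})
    (x : Config I K) :
    x ∈ B00 ∪ B11 ↔ ∃ v ∈ Γ, IsParityFlip hI x v := by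
  rw [hB00, hB11, hA10, hA01]
  constructor
  · rintro (⟨hx, v, ⟨hv, hvI, ht⟩, hxv⟩ | ⟨hx, v, ⟨hv, hvI, ht⟩, hxv⟩)
    · have hx : par I (x ⟨I, hI⟩) = 0 := par_eq_zero_iff.2 hx
      exact ⟨v, hv, hxv, by omega, by omega⟩
    · have hx : par I (x ⟨I, hI⟩) = 1 := par_eq_one_iff.2 hx
      have hvI : par I (v ⟨I, hI⟩) = 0 := par_eq_zero_iff.2 hvI
      exact ⟨v, hv, hxv, by omega, by omega⟩
  · rintro ⟨v, hv, hxv, hx, hvI⟩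
    have hv1 : par I (v ⟨I, hI⟩) ≤ 1 := par_le_one
    by_cases hx0 : x ⟨I, hI⟩ = 0
    · have hx' : par I (x ⟨I, hI⟩) = 0 := par_eq_zero_iff.2 hx0
      exact Or.inl ⟨hx0, v, ⟨hv, by omega, by omega⟩, hxv⟩
    · have hx' : par I (x ⟨I, hI⟩) = 1 := par_eq_one_iff.2 hx0
      have hv0 : par I (v ⟨I, hI⟩) = 0 := by omega
      exact Or.inr ⟨hx0, v, ⟨hv, par_eq_zero_iff.1 hv0, by omega⟩, hxv⟩

theorem sum_indicator_inter_le_of_flip (hI : I ∈ Finset.Ico I K) {Γ V1 B : Set (Config I K)}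
    (hV1 : V1 = {v | (∑ i : Finset.Ico I K, par i (v i)) % 2 = 1})
    (hB : ∀ x, ∀ v ∈ Γ, IsParityFlip hI x v → x ∈ B) :
    ∑ u, (Γ ∩ V1).indicator (fun u => ∏ i : Finset.Ico I K, w i (u i)) u ≤
      ∑ u, B.indicator (fun u => ∏ i : Finset.Ico I K, w i (u i)) u := by
  have odd_of_mem (v : Config I K) (a : Xc I) (ha : Function.update v ⟨I, hI⟩ a ∈ Γ ∩ V1) :
      (par I a + tailPar v) % 2 = 1 := by
    rw [hV1, Set.mem_inter_iff, Set.mem_ofPred_eq, sum_par_eq hI, Function.update_self,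
      tailPar_update] at ha
    exact ha.2
  refine sum_indicator_prod_le_of_fiberwise (fun i : Finset.Ico I K => w i) ⟨I, hI⟩ fun v =>
    sum_indicator_w_le_of_parity (tailPar v) (odd_of_mem v) fun a ha b hb =>
      hB _ _ ha.1 ⟨fun i hi => ?_, ?_, ?_⟩
  · rw [update_apply_of_succ_le hI v b hi, update_apply_of_succ_le hI v a hi]
  · rwa [Function.update_self, tailPar_update]
  · rw [Function.update_self, tailPar_update]
    exact odd_of_mem v a ha

end Configurations

theorem statement6 (μ : Measure XX) (hμ : IsProductMeasure μ)
    (I K : ℕ) (hIK : I + 2 ≤ K) (b c ρ : ℝ)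
    (Γ Ψ V0 V1 A01 A10 B11 B00 : Set ((i : Finset.Ico I K) → Xc i))
    (hΓ : Γ = {v | (ρ - 1 / 2) * b ≤ c - ∑ i : Finset.Ico I K, Real.log (wR i (v i)) ∧
      c - ∑ i : Finset.Ico I K, Real.log (wR i (v i)) ≤ (ρ + 1 / 2) * b})
    (hΨ : Ψ = {v | (ρ - 1 / 2) * b - ((I : ℝ) + 1) * Real.log 5 ≤
        c - ∑ i : Finset.Ico I K, Real.log (wR i (v i)) ∧
      c - ∑ i : Finset.Ico I K, Real.log (wR i (v i)) ≤
        (ρ + 1 / 2) * b + ((I : ℝ) + 1) * Real.log 5})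
    (hV0 : V0 = {v | (∑ i : Finset.Ico I K, par i (v i)) % 2 = 0})
    (hV1 : V1 = {v | (∑ i : Finset.Ico I K, par i (v i)) % 2 = 1})
    (hA01 : A01 = {v | v ∈ Γ ∧ v ⟨I, Finset.mem_Ico.mpr ⟨le_refl I, by omega⟩⟩ = 0 ∧
      (∑ i : Finset.Ico I K, if I + 1 ≤ (i : ℕ) then par i (v i) else 0) % 2 = 1})
    (hA10 : A10 = {v | v ∈ Γ ∧ par I (v ⟨I, Finset.mem_Ico.mpr ⟨le_refl I, by omega⟩⟩) = 1 ∧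
      (∑ i : Finset.Ico I K, if I + 1 ≤ (i : ℕ) then par i (v i) else 0) % 2 = 0})
    (hB11 : B11 = {x | x ⟨I, Finset.mem_Ico.mpr ⟨le_refl I, by omega⟩⟩ ≠ 0 ∧
      ∃ v ∈ A01, ∀ i : Finset.Ico I K, I + 1 ≤ (i : ℕ) → x i = v i})
    (hB00 : B00 = {x | x ⟨I, Finset.mem_Ico.mpr ⟨le_refl I, by omega⟩⟩ = 0 ∧
      ∃ v ∈ A10, ∀ i : Finset.Ico I K, I + 1 ≤ (i : ℕ) → x i = v i}) :
    B00 ∪ B11 ⊆ Ψ ∩ V0 ∧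
      μ (cylSet (Finset.Ico I K) (Γ ∩ V1)) ≤ μ (cylSet (Finset.Ico I K) (B00 ∪ B11)) := by
  have hI : I ∈ Finset.Ico I K := Finset.mem_Ico.mpr ⟨le_rfl, by omega⟩
  have mem_B := mem_union_iff_exists_flip hI hA01 hA10 hB11 hB00
  refine ⟨fun x hx => ?_, ?_⟩
  · obtain ⟨v, hv, hxv, hx, -⟩ := (mem_B x).1 hx
    have hlog := abs_le.mp (abs_sum_log_wR_sub_le hI hxv)
    rw [hΓ] at hv
    rw [hΨ, hV0]
    refine ⟨⟨by linarith [hv.1], by linarith [hv.2]⟩, ?_⟩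
    rwa [Set.mem_ofPred_eq, sum_par_eq hI, tailPar_eq_of_eqOn hxv]
  · rw [measure_cylSet_eq_sum hμ, measure_cylSet_eq_sum hμ]
    exact sum_indicator_inter_le_of_flip hI hV1 fun x v hv hxv => (mem_B x).2 ⟨v, hv, hxv⟩
end

section
/- The bijection T : G → G is non-singular: for every measurable set A ⊆ G, μ(A) = 0 if and only if μ(T(A)) = 0 (equivalently, both T and its inverse on G map null sets to null sets). -/
/-!
Each point is moved by `T` only in finitely many coordinates. On a cylinder where the first
`n` coordinates of `x` and of `T x` are prescribed and `T` fixes all later ones, `T` replaces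
the first `n` coordinates by a fixed pattern, and such a replacement transports `μ` restricted
to one cylinder to a positive multiple (the ratio of the cylinder weights) of `μ` restricted to
the other. Countably many such cylinders cover `X`, so `T` and its inverse preserve null sets.
-/

open MeasureTheory ENNReal Filter

/-- The equivalence relation `R`: `x R y` iff for some `n ≥ 1` the coordinates of `x` and `y`
beyond the `n`-th agree, and the parities of `∑_{i=1}^{n} π_i(x_i)` and
`∑_{i=1}^{n} π_i(y_i)` coincide. -/
def Rrel (x y : XX) : Prop :=
  ∃ n : ℕ, 1 ≤ n ∧ (∀ i, n ≤ i → x i = y i) ∧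
    (∑ i ∈ Finset.range n, par i (x i)) % 2 = (∑ i ∈ Finset.range n, par i (y i)) % 2

/-- The conull set `G` of points with infinitely many non-maximal and infinitely many
non-zero coordinates of (paper) index `≥ 2` (Lean index `≥ 1`). -/
def G : Set XX :=
  {x | {i : ℕ | 1 ≤ i ∧ (x i : ℕ) < 5 ^ (i + 1)}.Infinite ∧
    {i : ℕ | 1 ≤ i ∧ x i ≠ 0}.Infinite}

open Classical in
/-- The transformation `T`. If `x_1 ∈ {1,2,3,4}` (Lean coordinate `0`), it increments the
first coordinate. Otherwise (`x_1 ∈ {0,5}`), with `N(x)` the least (paper) index `≥ 2` with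
`x_{N(x)} < 5^{N(x)}`, it sets the first coordinate to `a_x`, the coordinates strictly between
`1` and `N(x)` to `0`, increments the `N(x)`-th coordinate, and keeps the rest; here
`a_x ∈ {0,1}` has the parity of `π_1(x_1) + ⋯ + π_{N(x)}(x_{N(x)}) - 1`. On points where no
such `N(x)` exists (a null set), `T` is defined to be the identity. -/
noncomputable def T (x : XX) : XX :=
  if 1 ≤ (x 0 : ℕ) ∧ (x 0 : ℕ) ≤ 4 then
    Function.update x 0 (x 0 + 1)
  else if h : ∃ i, 1 ≤ i ∧ (x i : ℕ) < 5 ^ (i + 1) then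
    fun i =>
      if i = 0 then
        (⟨((∑ j ∈ Finset.range (Nat.find h + 1), par j (x j)) + 1) % 2, by
          have h2 : ((∑ j ∈ Finset.range (Nat.find h + 1), par j (x j)) + 1) % 2 < 2 :=
            Nat.mod_lt _ (by norm_num)
          have h3 : 1 ≤ 5 ^ (i + 1) := Nat.one_le_pow _ _ (by norm_num)
          omega⟩ : Xc i)
      else if i < Nat.find h then 0
      else if hiN : i = Nat.find h then
        cast (congrArg Xc hiN).symm (x (Nat.find h) + 1)
      else x i
  else x

lemma w_ne_zero (n : ℕ) (a : Xc n) : w n a ≠ 0 := by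
  unfold w; split_ifs <;> simp [ENNReal.mul_eq_top]

lemma w_ne_top (n : ℕ) (a : Xc n) : w n a ≠ ∞ := by
  unfold w; split_ifs <;> simp

def cyl (Γ : Finset ℕ) (z : XX) : Set XX := {y | ∀ i ∈ Γ, y i = z i}

lemma measurableSet_cyl (Γ : Finset ℕ) (z : XX) : MeasurableSet (cyl Γ z) := by
  have : cyl Γ z = ⋂ i ∈ Γ, (fun x : XX => x i) ⁻¹' {z i} := by
    ext x; simp [cyl]
  rw [this]
  exact .biInter Γ.countable_toSet fun i _ => measurable_pi_apply i (measurableSet_singleton _)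

lemma cyl_empty (z : XX) : cyl ∅ z = Set.univ := by
  ext; simp [cyl]

lemma cyl_eq_of_mem {Γ : Finset ℕ} {x z : XX} (hx : x ∈ cyl Γ z) : cyl Γ z = cyl Γ x := by
  ext y; simp only [cyl, Set.mem_ofPred_eq]
  exact forall₂_congr fun i hi => by rw [hx i hi]

lemma cyl_inter_cyl_self (Γ Δ : Finset ℕ) (x : XX) : cyl Γ x ∩ cyl Δ x = cyl (Γ ∪ Δ) x := by
  ext y; simp only [cyl, Set.mem_inter_iff, Set.mem_ofPred_eq, Finset.mem_union]
  exact ⟨fun h i hi => hi.elim (h.1 i) (h.2 i), fun h => ⟨fun i hi => h i (.inl hi),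
    fun i hi => h i (.inr hi)⟩⟩

lemma isPiSystem_cyl : IsPiSystem {S : Set XX | ∃ Γ z, S = cyl Γ z} := by
  rintro _ ⟨Γ, z, rfl⟩ _ ⟨Δ, y, rfl⟩ ⟨x, hxz, hxy⟩
  exact ⟨Γ ∪ Δ, x, by rw [cyl_eq_of_mem hxz, cyl_eq_of_mem hxy, cyl_inter_cyl_self]⟩

lemma generateFrom_cyl :
    (MeasurableSpace.pi : MeasurableSpace XX) = .generateFrom {S | ∃ Γ z, S = cyl Γ z} := by
  refine le_antisymm (iSup_le fun i => ?_) (MeasurableSpace.generateFrom_le ?_)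
  · rw [← measurable_iff_comap_le]
    refine @measurable_to_countable' _ _ _ _ (_) _ fun a => ?_
    have : (fun x : XX => x i) ⁻¹' {a} = cyl {i} (Function.update 0 i a) := by
      ext x; simp [cyl]
    exact this ▸ MeasurableSpace.measurableSet_generateFrom ⟨_, _, rfl⟩
  · rintro _ ⟨Γ, z, rfl⟩
    exact measurableSet_cyl Γ z

def overwrite (Γ : Finset ℕ) (z x : XX) : XX := Γ.piecewise z x

lemma overwrite_apply_of_mem {Γ : Finset ℕ} (z x : XX) {i : ℕ} (hi : i ∈ Γ) :
    overwrite Γ z x i = z i :=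
  Γ.piecewise_eq_of_mem _ _ hi

lemma overwrite_apply_of_notMem {Γ : Finset ℕ} (z x : XX) {i : ℕ} (hi : i ∉ Γ) :
    overwrite Γ z x i = x i :=
  Γ.piecewise_eq_of_notMem _ _ hi

lemma overwrite_overwrite (Γ : Finset ℕ) (z z' x : XX) :
    overwrite Γ z (overwrite Γ z' x) = overwrite Γ z x :=
  Γ.piecewise_idem_right _ _ _

lemma overwrite_eq_self_of_mem_cyl {Γ : Finset ℕ} {x z : XX} (hx : x ∈ cyl Γ z) :
    overwrite Γ z x = x := by
  funext i
  by_cases hi : i ∈ Γ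
  · rw [overwrite_apply_of_mem _ _ hi, hx i hi]
  · rw [overwrite_apply_of_notMem _ _ hi]

lemma overwrite_mem_cyl (Γ : Finset ℕ) (z x : XX) : overwrite Γ z x ∈ cyl Γ z :=
  fun _ hi => overwrite_apply_of_mem _ _ hi

lemma measurable_overwrite (Γ : Finset ℕ) (z : XX) : Measurable (overwrite Γ z) := by
  refine measurable_pi_lambda _ fun i => ?_
  by_cases hi : i ∈ Γ
  · simp only [overwrite_apply_of_mem _ _ hi, measurable_const]
  · simp only [overwrite_apply_of_notMem _ _ hi]
    exact measurable_pi_apply i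

lemma cyl_inter_cyl_of_disjoint {Δ Γ : Finset ℕ} (h : Disjoint Δ Γ) (y z : XX) :
    cyl Δ y ∩ cyl Γ z = cyl (Δ ∪ Γ) (overwrite Δ y z) := by
  have hΔ : cyl Δ y = cyl Δ (overwrite Δ y z) := cyl_eq_of_mem (overwrite_mem_cyl Δ y z)
  have hΓ : cyl Γ z = cyl Γ (overwrite Δ y z) := by
    refine cyl_eq_of_mem fun i hi => ?_
    rw [overwrite_apply_of_notMem _ _ (Finset.disjoint_right.mp h hi)]
  rw [hΔ, hΓ, cyl_inter_cyl_self]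

lemma preimage_overwrite_cyl (Γ Δ : Finset ℕ) (z y : XX) :
    overwrite Γ z ⁻¹' cyl Δ y = ∅ ∨ overwrite Γ z ⁻¹' cyl Δ y = cyl (Δ \ Γ) y := by
  by_cases h : ∀ i ∈ Δ, i ∈ Γ → z i = y i
  · right; ext x
    simp only [cyl, Set.mem_preimage, Set.mem_ofPred_eq, Finset.mem_sdiff]
    refine ⟨fun hx i hi => ?_, fun hx i hi => ?_⟩
    · rw [← hx i hi.1, overwrite_apply_of_notMem _ _ hi.2]
    · by_cases hiΓ : i ∈ Γ
      · rw [overwrite_apply_of_mem _ _ hiΓ, h i hi hiΓ]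
      · rw [overwrite_apply_of_notMem _ _ hiΓ, hx i ⟨hi, hiΓ⟩]
  · left; push Not at h
    obtain ⟨i, hiΔ, hiΓ, hne⟩ := h
    exact Set.eq_empty_of_forall_notMem fun x hx =>
      hne (by simpa [overwrite_apply_of_mem _ _ hiΓ] using hx i hiΔ)

namespace IsProductMeasure

variable {μ : Measure XX} (hμ : IsProductMeasure μ)
include hμ

lemma measure_cyl (Γ : Finset ℕ) (z : XX) : μ (cyl Γ z) = ∏ i ∈ Γ, w i (z i) := by
  have : cyl Γ z = cylPt Γ (fun i => z i) := by
    ext x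
    simp [cyl, cylPt, cylSet, funext_iff]
  rw [this, hμ, Finset.prod_coe_sort Γ (fun i => w i (z i))]

lemma isFiniteMeasure : IsFiniteMeasure μ :=
  ⟨by simp [← cyl_empty 0, hμ.measure_cyl]⟩

lemma measure_cyl_inter_cyl_of_disjoint {Δ Γ : Finset ℕ} (h : Disjoint Δ Γ) (y z : XX) :
    μ (cyl Δ y ∩ cyl Γ z) = μ (cyl Δ y) * ∏ i ∈ Γ, w i (z i) := by
  rw [cyl_inter_cyl_of_disjoint h, hμ.measure_cyl, hμ.measure_cyl, Finset.prod_union h]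
  congr 1
  · exact Finset.prod_congr rfl fun i hi => by rw [overwrite_apply_of_mem _ _ hi]
  · exact Finset.prod_congr rfl fun i hi => by
      rw [overwrite_apply_of_notMem _ _ (Finset.disjoint_right.mp h hi)]

lemma measure_preimage_overwrite_cyl_inter_cyl (Γ Δ : Finset ℕ) (z y z' : XX) :
    μ (overwrite Γ z ⁻¹' cyl Δ y ∩ cyl Γ z') =
      μ (overwrite Γ z ⁻¹' cyl Δ y) * ∏ i ∈ Γ, w i (z' i) := by
  rcases preimage_overwrite_cyl Γ Δ z y with h | h <;> rw [h]
  · simp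
  · exact hμ.measure_cyl_inter_cyl_of_disjoint Finset.sdiff_disjoint y z'

lemma map_overwrite_restrict_cyl (Γ : Finset ℕ) (z z' : XX) :
    (μ.restrict (cyl Γ z')).map (overwrite Γ z) =
      ((∏ i ∈ Γ, w i (z' i)) / ∏ i ∈ Γ, w i (z i)) • μ.restrict (cyl Γ z) := by
  have := hμ.isFiniteMeasure
  have hcyl : ∀ S ∈ {S | ∃ Δ y, S = cyl Δ y},
      (μ.restrict (cyl Γ z')).map (overwrite Γ z) S =
        (((∏ i ∈ Γ, w i (z' i)) / ∏ i ∈ Γ, w i (z i)) • μ.restrict (cyl Γ z)) S := by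
    rintro _ ⟨Δ, y, rfl⟩
    have hmeas := measurable_overwrite Γ z (measurableSet_cyl Δ y)
    have hinter : cyl Δ y ∩ cyl Γ z = overwrite Γ z ⁻¹' cyl Δ y ∩ cyl Γ z :=
      Set.ext fun x => and_congr_left fun hx => by
        rw [Set.mem_preimage, overwrite_eq_self_of_mem_cyl hx]
    rw [Measure.map_apply (measurable_overwrite Γ z) (measurableSet_cyl Δ y),
      Measure.restrict_apply hmeas, Measure.smul_apply, smul_eq_mul,
      Measure.restrict_apply (measurableSet_cyl Δ y), hinter,
      hμ.measure_preimage_overwrite_cyl_inter_cyl, hμ.measure_preimage_overwrite_cyl_inter_cyl,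
      mul_left_comm, ENNReal.div_mul_cancel (Finset.prod_ne_zero_iff.mpr fun i _ => w_ne_zero i _)
        (ENNReal.prod_ne_top fun i _ => w_ne_top i _)]
  refine ext_of_generate_finite _ generateFrom_cyl isPiSystem_cyl hcyl ?_
  rw [← cyl_empty 0]
  exact hcyl _ ⟨_, _, rfl⟩

lemma measure_overwrite_image_null {Γ : Finset ℕ} {z : XX} {B : Set XX} (hB : B ⊆ cyl Γ z)
    (hB0 : μ B = 0) (z' : XX) : μ (overwrite Γ z' '' B) = 0 := by
  have himage : overwrite Γ z' '' B ⊆ overwrite Γ z ⁻¹' B ∩ cyl Γ z' := by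
    rintro _ ⟨x, hx, rfl⟩
    refine ⟨?_, overwrite_mem_cyl Γ z' x⟩
    rw [Set.mem_preimage, overwrite_overwrite, overwrite_eq_self_of_mem_cyl (hB hx)]
    exact hx
  refine measure_mono_null himage (nonpos_iff_eq_zero.mp ?_)
  calc μ (overwrite Γ z ⁻¹' B ∩ cyl Γ z')
      = μ.restrict (cyl Γ z') (overwrite Γ z ⁻¹' B) :=
        (Measure.restrict_apply' (measurableSet_cyl Γ z')).symm
    _ ≤ (μ.restrict (cyl Γ z')).map (overwrite Γ z) B :=
        Measure.le_map_apply (measurable_overwrite Γ z).aemeasurable B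
    _ ≤ ((∏ i ∈ Γ, w i (z' i)) / ∏ i ∈ Γ, w i (z i)) * μ B := by
        rw [hμ.map_overwrite_restrict_cyl, Measure.smul_apply, smul_eq_mul]
        exact mul_le_mul_right (Measure.restrict_apply_le _ B) _
    _ = 0 := by rw [hB0, mul_zero]

lemma measure_overwrite_image_eq_zero_iff {Γ : Finset ℕ} {z : XX} {B : Set XX}
    (hB : B ⊆ cyl Γ z) (z' : XX) : μ (overwrite Γ z' '' B) = 0 ↔ μ B = 0 := by
  refine ⟨fun h => ?_, fun h => hμ.measure_overwrite_image_null hB h z'⟩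
  have hback : overwrite Γ z '' (overwrite Γ z' '' B) = B := by
    rw [Set.image_image, Set.image_congr fun x hx => by
      rw [overwrite_overwrite, overwrite_eq_self_of_mem_cyl (hB hx)], Set.image_id']
  have hsub : overwrite Γ z' '' B ⊆ cyl Γ z' := Set.image_subset_iff.mpr fun x _ =>
    overwrite_mem_cyl Γ z' x
  rw [← hback]
  exact hμ.measure_overwrite_image_null hsub h z

theorem measure_image_eq_zero_iff {f : XX → XX} {A : Set XX}
    (hf : ∀ x ∈ A, ∀ᶠ i in atTop, f x i = x i) : μ (f '' A) = 0 ↔ μ A = 0 := by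
  let P (n : ℕ) (u v : (i : Fin n) → Xc i) : Set XX :=
    {x ∈ A | (∀ i : Fin n, x i = u i) ∧ (∀ i : Fin n, f x i = v i) ∧ ∀ i ≥ n, f x i = x i}
  have hcover : A = ⋃ (n) (u) (v), P n u v := by
    refine subset_antisymm (fun x hx => ?_) (Set.iUnion_subset fun n =>
      Set.iUnion₂_subset fun u v => Set.sep_subset _ _)
    obtain ⟨n, hn⟩ := eventually_atTop.mp (hf x hx)
    exact Set.mem_iUnion₂.mpr ⟨n, fun i => x i, Set.mem_iUnion.mpr
      ⟨fun i => f x i, hx, fun _ => rfl, fun _ => rfl, hn⟩⟩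
  have hpiece (n : ℕ) (u v : (i : Fin n) → Xc i) :
      μ (f '' P n u v) = 0 ↔ μ (P n u v) = 0 := by
    rcases (P n u v).eq_empty_or_nonempty with h | ⟨x₀, hx₀⟩
    · simp [h]
    have hsub : P n u v ⊆ cyl (Finset.range n) x₀ := fun x hx i hi => by
      have hi : i < n := Finset.mem_range.mp hi
      exact (hx.2.1 ⟨i, hi⟩).trans (hx₀.2.1 ⟨i, hi⟩).symm
    have hf_eq : ∀ x ∈ P n u v, f x = overwrite (Finset.range n) (f x₀) x := fun x hx => by
      funext i
      by_cases hi : i < n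
      · rw [overwrite_apply_of_mem _ _ (Finset.mem_range.mpr hi)]
        exact (hx.2.2.1 ⟨i, hi⟩).trans (hx₀.2.2.1 ⟨i, hi⟩).symm
      · rw [overwrite_apply_of_notMem _ _ (by simpa using hi)]
        exact hx.2.2.2 i (not_lt.mp hi)
    rw [Set.image_congr hf_eq]
    exact hμ.measure_overwrite_image_eq_zero_iff hsub (f x₀)
  rw [hcover]
  simp only [Set.image_iUnion, measure_iUnion_null_iff]
  exact forall_congr' fun n => forall_congr' fun u => forall_congr' fun v => hpiece n u v

end IsProductMeasure

lemma T_eventually_eq (x : XX) : ∀ᶠ i in atTop, T x i = x i := by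
  unfold T
  split_ifs with _ hN
  · filter_upwards [eventually_ne_atTop 0] with i hi using Function.update_of_ne hi _ _
  · filter_upwards [eventually_gt_atTop (Nat.find hN)] with i hi
    rw [if_neg (by omega), if_neg (by omega), dif_neg (by omega)]
  · exact .of_forall fun _ => rfl

theorem statement11_general (μ : Measure XX) (hμ : IsProductMeasure μ)
    (A : Set XX) :
    μ A = 0 ↔ μ (T '' A) = 0 :=
  (hμ.measure_image_eq_zero_iff fun x _ => T_eventually_eq x).symm

theorem statement11 (μ : Measure XX) (hμ : IsProductMeasure μ)
    (A : Set XX) (hA : MeasurableSet A) (hAG : A ⊆ G) :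
    μ A = 0 ↔ μ (T '' A) = 0 :=
  statement11_general μ hμ A
end
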